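/- Let v, f, φ be smooth real functions on ℝ² with φ_y = φ_{xx} + 2v·φ_x, f_y = f_{xx} + 2v·f_x, and f nowhere vanishing. Then φ̃ := φ/f satisfies φ̃_y = φ̃_{xx} + 2ṽ·φ̃_x, where ṽ := v + f_x/f. (Darboux covariance of the first Lax equation of the mKPHSCS under the gauge transformation G_1[f]; a claim established in the proof of Theorem 6.1.) -/

import Mathlib

noncomputable section

abbrev Pt2 : Type := ℝ × ℝ

/-- partial derivative in the first coordinate `x`. -/
def px (F : Pt2 → ℝ) : Pt2 → ℝ := fun p => deriv (fun s => F (s, p.2)) p.1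

/-- partial derivative in the second coordinate `y`. -/
def py (F : Pt2 → ℝ) : Pt2 → ℝ := fun p => deriv (fun s => F (p.1, s)) p.2

lemma sectx {F : Pt2 → ℝ} (hF : ContDiff ℝ (⊤ : ℕ∞) F) (y : ℝ) :
    Differentiable ℝ (fun s => F (s, y)) :=
  (hF.differentiable (by simp)).comp (differentiable_id.prodMk (differentiable_const y))

lemma secty {F : Pt2 → ℝ} (hF : ContDiff ℝ (⊤ : ℕ∞) F) (x : ℝ) :
    Differentiable ℝ (fun s => F (x, s)) :=
  (hF.differentiable (by simp)).comp ((differentiable_const x).prodMk differentiable_id)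

lemma px_eq_fderiv {F : Pt2 → ℝ} (hF : ContDiff ℝ (⊤ : ℕ∞) F) :
    px F = fun p => fderiv ℝ F p (1, 0) := by
  funext p
  have h1 : HasDerivAt (fun s : ℝ => ((s, p.2) : Pt2)) (1, 0) p.1 :=
    (hasDerivAt_id p.1).prodMk (hasDerivAt_const p.1 p.2)
  have h2 := (hF.differentiable (by simp) p).hasFDerivAt.comp_hasDerivAt p.1 h1
  exact h2.deriv

lemma contDiff_px {F : Pt2 → ℝ} (hF : ContDiff ℝ (⊤ : ℕ∞) F) : ContDiff ℝ (⊤ : ℕ∞) (px F) := by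
  rw [px_eq_fderiv hF]
  exact (hF.fderiv_right (by simp)).clm_apply contDiff_const

lemma px_mul {F G : Pt2 → ℝ} (hF : ContDiff ℝ (⊤ : ℕ∞) F) (hG : ContDiff ℝ (⊤ : ℕ∞) G) (p : Pt2) :
    px (fun q => F q * G q) p = px F p * G p + F p * px G p :=
  deriv_mul (sectx hF p.2 p.1) (sectx hG p.2 p.1)

lemma px_sub {F G : Pt2 → ℝ} (hF : ContDiff ℝ (⊤ : ℕ∞) F) (hG : ContDiff ℝ (⊤ : ℕ∞) G) (p : Pt2) :
    px (fun q => F q - G q) p = px F p - px G p :=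
  deriv_sub (sectx hF p.2 p.1) (sectx hG p.2 p.1)

lemma px_div {F G : Pt2 → ℝ} (hF : ContDiff ℝ (⊤ : ℕ∞) F) (hG : ContDiff ℝ (⊤ : ℕ∞) G) (p : Pt2)
    (h0 : G p ≠ 0) :
    px (fun q => F q / G q) p = (px F p * G p - F p * px G p) / (G p) ^ 2 :=
  deriv_div (sectx hF p.2 p.1) (sectx hG p.2 p.1) h0

lemma py_div {F G : Pt2 → ℝ} (hF : ContDiff ℝ (⊤ : ℕ∞) F) (hG : ContDiff ℝ (⊤ : ℕ∞) G) (p : Pt2)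
    (h0 : G p ≠ 0) :
    py (fun q => F q / G q) p = (py F p * G p - F p * py G p) / (G p) ^ 2 :=
  deriv_div (secty hF p.1 p.2) (secty hG p.1 p.2) h0

lemma px_sq {F : Pt2 → ℝ} (hF : ContDiff ℝ (⊤ : ℕ∞) F) (p : Pt2) :
    px (fun q => F q ^ 2) p = 2 * F p * px F p := by
  have := deriv_fun_pow (n := 2) (sectx hF p.2 p.1)
  simpa [px] using this

theorem mkp_lax_darboux_G1 (v f φ : Pt2 → ℝ)
    (hv : ContDiff ℝ (⊤ : ℕ∞) v) (hf : ContDiff ℝ (⊤ : ℕ∞) f) (hφ : ContDiff ℝ (⊤ : ℕ∞) φ)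
    (hφeq : ∀ p : Pt2, py φ p = px (px φ) p + 2 * v p * px φ p)
    (hfeq : ∀ p : Pt2, py f p = px (px f) p + 2 * v p * px f p)
    (hf0 : ∀ p : Pt2, f p ≠ 0) :
    ∀ p : Pt2,
      py (fun p' => φ p' / f p') p
        = px (px (fun p' => φ p' / f p')) p
          + 2 * (v p + px f p / f p) * px (fun p' => φ p' / f p') p := by
  intro p
  have hpxφ := contDiff_px hφ
  have hpxf := contDiff_px hf
  have hnum : ContDiff ℝ (⊤ : ℕ∞) (fun q => px φ q * f q - φ q * px f q) :=
    ((hpxφ.mul hf).sub (hφ.mul hpxf))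
  have hden : ContDiff ℝ (⊤ : ℕ∞) (fun q => f q ^ 2) := hf.pow 2
  have hgx : px (fun p' => φ p' / f p')
      = fun q => (px φ q * f q - φ q * px f q) / f q ^ 2 := by
    funext q
    exact px_div hφ hf q (hf0 q)
  rw [hgx]
  rw [px_div hnum hden p (pow_ne_zero 2 (hf0 p)),
      px_sub (hpxφ.mul hf) (hφ.mul hpxf) p,
      px_mul hpxφ hf p, px_mul hφ hpxf p, px_sq hf p,
      py_div hφ hf p (hf0 p), hφeq p, hfeq p]
  have h0 := hf0 p
  field_simp
  ring
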